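/- For every n ≥ 1 one has in ℂ[X] the irreducible factorization Φ_n^*(X) = ∏_{d ∣ n, rad(n) ∣ d} Φ_d(X), where the product runs over the divisors d of n that are divisible by the squarefree kernel rad(n) of n. -/
import Mathlib


open Complex Polynomial Finset

/-- The unitary gcd `(j,n)_*`: the largest `d` with `d ∣ j`, `d ∣ n` and `gcd(d, n/d) = 1`. -/
def ugcd (j n : ℕ) : ℕ :=
  Nat.findGreatest (fun d => d ∣ j ∧ d ∣ n ∧ Nat.gcd d (n / d) = 1) n

/-- The unitary cyclotomic polynomial `Φ_n^*(X) = ∏_{1 ≤ j ≤ n, (j,n)_* = 1} (X − ζ_n^j)`. -/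
noncomputable def unitaryCyc (n : ℕ) : Polynomial ℂ :=
  ∏ j ∈ (Finset.Icc 1 n).filter (fun j => ugcd j n = 1),
    (X - C (Complex.exp (2 * Real.pi * Complex.I / n) ^ j))

/-- The squarefree kernel `rad(n) = ∏_{p ∣ n} p`. -/
def rad (n : ℕ) : ℕ := ∏ p ∈ n.primeFactors, p

lemma ugcd_eq_one_iff {j n : ℕ} (hj : 1 ≤ j) (hn : 1 ≤ n) :
    ugcd j n = 1 ↔ ∀ p ∈ n.primeFactors, ¬ p ^ n.factorization p ∣ j := by
  rw [ugcd, Nat.findGreatest_eq_iff]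
  constructor
  · rintro ⟨-, -, H⟩ p hp hpj
    have hp' : p.Prime := Nat.prime_of_mem_primeFactors hp
    have he : 1 ≤ n.factorization p :=
      (Nat.Prime.factorization_pos_of_dvd hp' (by omega) (Nat.dvd_of_mem_primeFactors hp))
    have hdvdn : p ^ n.factorization p ∣ n := Nat.ordProj_dvd n p
    have h1 : 1 < p ^ n.factorization p :=
      lt_of_lt_of_le hp'.one_lt (Nat.le_self_pow (by omega) p)
    exact H h1 (Nat.le_of_dvd (by omega) hdvdn)
      ⟨hpj, hdvdn, Nat.Coprime.pow_left _ (Nat.coprime_ordCompl hp' (by omega))⟩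
  · intro H
    refine ⟨hn, fun _ => ⟨one_dvd _, one_dvd _, Nat.gcd_one_left _⟩, ?_⟩
    rintro d hd hdn ⟨hdj, hdn', hcop⟩
    obtain ⟨p, hp, hpd⟩ := Nat.exists_prime_and_dvd (by omega : d ≠ 1)
    have hd0 : d ≠ 0 := by omega
    have hpmem : p ∈ n.primeFactors := Nat.mem_primeFactors.2 ⟨hp, hpd.trans hdn', by omega⟩
    refine H p hpmem ?_
    have hnd : (n / d) ≠ 0 := by
      have := Nat.div_pos (Nat.le_of_dvd (by omega) hdn') (by omega)
      omega
    have hpnd : ¬ p ∣ n / d := by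
      intro hc
      have : p ∣ Nat.gcd d (n / d) := Nat.dvd_gcd hpd hc
      rw [hcop] at this
      exact hp.ne_one (Nat.dvd_one.mp this)
    have hfz : (n / d).factorization p = 0 := Nat.factorization_eq_zero_of_not_dvd hpnd
    have hmul : n = d * (n / d) := (Nat.mul_div_cancel' hdn').symm
    have hfact : n.factorization p = d.factorization p := by
      conv_lhs => rw [hmul]
      rw [Nat.factorization_mul hd0 hnd]
      simp [hfz]
    rw [hfact]
    exact (Nat.ordProj_dvd d p).trans hdj

lemma rad_dvd_iff {j n : ℕ} (hj : 1 ≤ j) (hn : 1 ≤ n) :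
    rad n ∣ n / Nat.gcd j n ↔ ∀ p ∈ n.primeFactors, ¬ p ^ n.factorization p ∣ j := by
  have hj0 : j ≠ 0 := by omega
  have hn0 : n ≠ 0 := by omega
  have hg0 : Nat.gcd j n ≠ 0 := Nat.gcd_ne_zero_left hj0
  have hgn : Nat.gcd j n ∣ n := Nat.gcd_dvd_right j n
  have hm0 : n / Nat.gcd j n ≠ 0 := by
    have := Nat.div_pos (Nat.le_of_dvd (by omega) hgn) (by omega)
    omega
  have key : ∀ p ∈ n.primeFactors, (p ∣ n / Nat.gcd j n ↔ ¬ p ^ n.factorization p ∣ j) := by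
    intro p hp
    have hp' : p.Prime := Nat.prime_of_mem_primeFactors hp
    rw [hp'.dvd_iff_one_le_factorization hm0, Nat.factorization_div hgn,
      Finsupp.tsub_apply, hp'.pow_dvd_iff_le_factorization hj0,
      Nat.factorization_gcd hj0 hn0, Finsupp.inf_apply]
    omega
  constructor
  · intro h p hp
    rw [← key p hp]
    exact dvd_trans (Finset.dvd_prod_of_mem _ hp) h
  · intro h
    exact Finset.prod_primes_dvd _ (fun p hp => (Nat.prime_of_mem_primeFactors hp).prime)
      (fun p hp => (key p hp).2 (h p hp))

lemma key_iff {j n : ℕ} (hj : 1 ≤ j) (hn : 1 ≤ n) :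
    ugcd j n = 1 ↔ rad n ∣ n / Nat.gcd j n :=
  (ugcd_eq_one_iff hj hn).trans (rad_dvd_iff hj hn).symm

theorem stmt6 (n : ℕ) (hn : 1 ≤ n) :
    unitaryCyc n = ∏ d ∈ n.divisors.filter (fun d => rad n ∣ d), cyclotomic d ℂ := by
  have hn0 : n ≠ 0 := by omega
  set ζ : ℂ := Complex.exp (2 * Real.pi * Complex.I / n) with hζdef
  have hζ : IsPrimitiveRoot ζ n := Complex.isPrimitiveRoot_exp n hn0
  set S := (Finset.Icc 1 n).filter (fun j => ugcd j n = 1) with hS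
  set D := n.divisors.filter (fun d => rad n ∣ d) with hD
  -- order of ζ ^ j
  have hpow : ∀ j : ℕ, 1 ≤ j → IsPrimitiveRoot (ζ ^ j) (n / Nat.gcd j n) := by
    intro j hj
    have hgpos : 0 < Nat.gcd j n := Nat.gcd_pos_of_pos_left _ (by omega)
    have h1 : ζ ^ j = (ζ ^ Nat.gcd j n) ^ (j / Nat.gcd j n) := by
      rw [← pow_mul, Nat.mul_div_cancel' (Nat.gcd_dvd_left j n)]
    rw [h1]
    exact (hζ.pow_of_dvd (by omega) (Nat.gcd_dvd_right j n)).pow_of_coprime _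
      (Nat.coprime_div_gcd_div_gcd hgpos)
  -- injectivity of j ↦ ζ ^ j on [1, n]
  have hinj : ∀ j ∈ S, ∀ k ∈ S, ζ ^ j = ζ ^ k → j = k := by
    intro j hjS k hkS hjk
    rw [hS, Finset.mem_filter, Finset.mem_Icc] at hjS hkS
    have hjm : ζ ^ j = ζ ^ (j % n) := pow_eq_pow_mod j hζ.pow_eq_one
    have hkm : ζ ^ k = ζ ^ (k % n) := pow_eq_pow_mod k hζ.pow_eq_one
    have h := hζ.pow_inj (Nat.mod_lt _ (by omega)) (Nat.mod_lt _ (by omega))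
      (hjm.symm.trans (hjk.trans hkm))
    have h1 : j % n = j ∨ j = n := by
      rcases Nat.lt_or_ge j n with h'|h'
      · exact Or.inl (Nat.mod_eq_of_lt h')
      · exact Or.inr (by omega)
    have h2 : k % n = k ∨ k = n := by
      rcases Nat.lt_or_ge k n with h'|h'
      · exact Or.inl (Nat.mod_eq_of_lt h')
      · exact Or.inr (by omega)
    have hns : n % n = 0 := Nat.mod_self n
    rcases h1 with h1|h1 <;> rcases h2 with h2|h2
    · omega
    · subst h2; rw [hns] at h; omega
    · subst h1; rw [hns] at h; omega
    · omega
  -- image = biUnion of primitive roots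
  have himg : S.image (fun j => ζ ^ j) = D.biUnion (fun d => primitiveRoots d ℂ) := by
    ext μ
    simp only [Finset.mem_image, Finset.mem_biUnion]
    constructor
    · rintro ⟨j, hjS, rfl⟩
      rw [hS, Finset.mem_filter, Finset.mem_Icc] at hjS
      obtain ⟨⟨hj1, hjn⟩, hu⟩ := hjS
      have hgpos : 0 < Nat.gcd j n := Nat.gcd_pos_of_pos_left _ (by omega)
      have hdpos : 0 < n / Nat.gcd j n :=
        Nat.div_pos (Nat.le_of_dvd (by omega) (Nat.gcd_dvd_right j n)) hgpos
      refine ⟨n / Nat.gcd j n, ?_, (mem_primitiveRoots hdpos).2 (hpow j hj1)⟩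
      rw [hD, Finset.mem_filter, Nat.mem_divisors]
      exact ⟨⟨Nat.div_dvd_of_dvd (Nat.gcd_dvd_right j n), hn0⟩, (key_iff hj1 hn).1 hu⟩
    · rintro ⟨d, hdD, hμ⟩
      rw [hD, Finset.mem_filter, Nat.mem_divisors] at hdD
      obtain ⟨⟨hdn, -⟩, hrad⟩ := hdD
      have hd0 : d ≠ 0 := by
        rintro rfl
        exact hn0 (Nat.eq_zero_of_zero_dvd hdn)
      have hμ' : IsPrimitiveRoot μ d := (mem_primitiveRoots (Nat.pos_of_ne_zero hd0)).1 hμ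
      have hμn : μ ^ n = 1 := by
        obtain ⟨c, rfl⟩ := hdn
        rw [pow_mul, hμ'.pow_eq_one, one_pow]
      haveI : NeZero n := ⟨hn0⟩
      obtain ⟨i, hi, hiμ⟩ := hζ.eq_pow_of_pow_eq_one hμn
      set j := if i = 0 then n else i with hjdef
      have hj1 : 1 ≤ j := by
        rw [hjdef]; split <;> omega
      have hjn : j ≤ n := by
        rw [hjdef]; split <;> omega
      have hζj : ζ ^ j = μ := by
        rw [hjdef]
        split
        · rename_i h0
          rw [hζ.pow_eq_one, ← hiμ, h0, pow_zero]
        · exact hiμ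
      have hord : IsPrimitiveRoot (ζ ^ j) (n / Nat.gcd j n) := hpow j hj1
      rw [hζj] at hord
      have hd_eq : d = n / Nat.gcd j n := hμ'.unique hord
      refine ⟨j, ?_, hζj⟩
      rw [hS, Finset.mem_filter, Finset.mem_Icc]
      exact ⟨⟨hj1, hjn⟩, (key_iff hj1 hn).2 (hd_eq ▸ hrad)⟩
  -- disjointness
  have hdisj : (D : Set ℕ).PairwiseDisjoint (fun d => primitiveRoots d ℂ) := by
    intro d1 hd1 d2 hd2 hne
    simp only [Finset.mem_coe] at hd1 hd2
    rw [Function.onFun, Finset.disjoint_left]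
    intro μ hμ1 hμ2
    have h1 : d1 ≠ 0 := by
      rw [hD, Finset.mem_filter, Nat.mem_divisors] at hd1
      rintro rfl; exact hn0 (Nat.eq_zero_of_zero_dvd hd1.1.1)
    have h2 : d2 ≠ 0 := by
      rw [hD, Finset.mem_filter, Nat.mem_divisors] at hd2
      rintro rfl; exact hn0 (Nat.eq_zero_of_zero_dvd hd2.1.1)
    exact hne (((mem_primitiveRoots (Nat.pos_of_ne_zero h1)).1 hμ1).unique
      ((mem_primitiveRoots (Nat.pos_of_ne_zero h2)).1 hμ2))
  calc unitaryCyc n = ∏ j ∈ S, (X - C (ζ ^ j)) := rfl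
    _ = ∏ μ ∈ S.image (fun j => ζ ^ j), (X - C μ) := by rw [Finset.prod_image hinj]
    _ = ∏ μ ∈ D.biUnion (fun d => primitiveRoots d ℂ), (X - C μ) := by rw [himg]
    _ = ∏ d ∈ D, ∏ μ ∈ primitiveRoots d ℂ, (X - C μ) := Finset.prod_biUnion hdisj
    _ = ∏ d ∈ D, cyclotomic d ℂ := by
        refine Finset.prod_congr rfl fun d hd => ?_
        rw [hD, Finset.mem_filter, Nat.mem_divisors] at hd
        have hd0 : d ≠ 0 := by
          rintro rfl; exact hn0 (Nat.eq_zero_of_zero_dvd hd.1.1)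
        exact (cyclotomic_eq_prod_X_sub_primitiveRoots (Complex.isPrimitiveRoot_exp d hd0)).symm
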